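/- Let n ≥ 1, let a < b be real numbers, let C be an n×n real symmetric matrix, let D : ℝ → Matrix n n ℝ be continuous on [a,b] with each D(s) symmetric, and let H₀ be an n×n complex symmetric matrix. Suppose Y, Z : ℝ → Matrix n n ℂ satisfy Y(a) = I, Z(a) = H₀, and for every s ∈ [a,b], Y has derivative C·Z(s) at s and Z has derivative −D(s)·Y(s) at s (with C and D(s) viewed as complex matrices), and suppose det Y(s) ≠ 0 for every s ∈ [a,b]. Set H(s) := Z(s)·Y(s)⁻¹. Then for every s ∈ [a,b], det(Im H(s)) · |det Y(s)|² = det(Im H₀). -/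

import Mathlib

/-!
Since `C` and `D` are real symmetric, both Wronskians `Yᵀ Z - Zᵀ Y` and `Yᴴ Z - Zᴴ Y` are
constant in `s`. The first vanishes at `a` because `H₀` is symmetric, so `H = Z Y⁻¹` stays
symmetric; then `H - Hᴴ = 2i Im H`, and the second gives `Yᴴ (2i Im H) Y = 2i Im H₀`.
Taking determinants and cancelling `(2i)ⁿ` gives the identity.
-/

open Matrix Set

attribute [local instance] Matrix.normedAddCommGroup Matrix.normedSpace

section Calculus

variable {l m n : Type*} [Fintype m] [Fintype n] {R : Type*} [NormedRing R] [NormedAlgebra ℝ R]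

theorem HasDerivAt.matrix_mul {f : ℝ → Matrix l m R} {g : ℝ → Matrix m n R}
    {f' : Matrix l m R} {g' : Matrix m n R} {t : ℝ}
    (hf : HasDerivAt f f' t) (hg : HasDerivAt g g' t) :
    HasDerivAt (fun s => f s * g s) (f' * g t + f t * g') t := by
  refine hasDerivAt_pi.mpr fun i => hasDerivAt_pi.mpr fun j => ?_
  simp only [mul_apply, Matrix.add_apply, ← Finset.sum_add_distrib]
  exact HasDerivAt.fun_sum fun k _ =>
    (hasDerivAt_pi.mp (hasDerivAt_pi.mp hf i) k).fun_mul
      (hasDerivAt_pi.mp (hasDerivAt_pi.mp hg k) j)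

theorem HasDerivAt.matrix_transpose {f : ℝ → Matrix m n R} {f' : Matrix m n R} {t : ℝ}
    (hf : HasDerivAt f f' t) : HasDerivAt (fun s => (f s)ᵀ) f'ᵀ t :=
  hasDerivAt_pi.mpr fun i => hasDerivAt_pi.mpr fun j => hasDerivAt_pi.mp (hasDerivAt_pi.mp hf j) i

/-- For `φ = ᵀ` and `φ = ᴴ`, `φ Y * Z - φ Z * Y` is the Wronskian of the system
`Y' = C Z`, `Z' = -D Y`. -/
theorem wronskian_eq_of_hasDerivAt {φ : Matrix n n R → Matrix n n R}
    (hφ : ∀ {f : ℝ → Matrix n n R} {f' : Matrix n n R} {t : ℝ},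
      HasDerivAt f f' t → HasDerivAt (fun s => φ (f s)) (φ f') t)
    (hφ_neg : ∀ A, φ (-A) = -φ A) (hφ_mul : ∀ A B, φ (A * B) = φ B * φ A)
    {a b : ℝ} {C : Matrix n n R} {D : ℝ → Matrix n n R}
    (hC : φ C = C) (hD : ∀ s ∈ Icc a b, φ (D s) = D s) {Y Z : ℝ → Matrix n n R}
    (hY : ∀ s ∈ Icc a b, HasDerivAt Y (C * Z s) s)
    (hZ : ∀ s ∈ Icc a b, HasDerivAt Z (-(D s * Y s)) s) :
    ∀ s ∈ Icc a b, φ (Y s) * Z s - φ (Z s) * Y s = φ (Y a) * Z a - φ (Z a) * Y a := by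
  have hW : ∀ s ∈ Icc a b, HasDerivAt (fun t => φ (Y t) * Z t - φ (Z t) * Y t) 0 s := by
    intro s hs
    refine (((hφ (hY s hs)).matrix_mul (hZ s hs)).fun_sub
      ((hφ (hZ s hs)).matrix_mul (hY s hs))).congr_deriv ?_
    rw [hφ_neg, hφ_mul, hφ_mul, hC, hD s hs]
    simp only [Matrix.mul_neg, Matrix.neg_mul, Matrix.mul_assoc]
    abel
  exact constant_of_has_deriv_right_zero (fun s hs => (hW s hs).continuousAt.continuousWithinAt)
    fun s hs => (hW s (Ico_subset_Icc_self hs)).hasDerivWithinAt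

end Calculus

section Algebra

variable {m n : Type*}

theorem conjTranspose_map_ofReal (M : Matrix m n ℝ) :
    (M.map ((↑) : ℝ → ℂ))ᴴ = Mᵀ.map (↑) := by
  ext i j
  simp

theorem sub_conjTranspose_of_isSymm {H : Matrix n n ℂ} (hH : H.IsSymm) :
    H - Hᴴ = (2 * Complex.I) • (H.map Complex.im).map (↑) := by
  ext i j
  rw [Matrix.sub_apply, conjTranspose_apply, hH.apply i j, Matrix.smul_apply, map_apply,
    map_apply, smul_eq_mul, Complex.star_def, Complex.sub_conj]
  push_cast
  ring

variable [Fintype n] [DecidableEq n]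

theorem det_mul_norm_sq_of_conjTranspose_mul_mul {A B : Matrix n n ℝ} {Y : Matrix n n ℂ}
    (h : Yᴴ * A.map (↑) * Y = B.map (↑)) : A.det * ‖Y.det‖ ^ 2 = B.det := by
  have hdet := congrArg det h
  have det_map (M : Matrix n n ℝ) : (M.map (↑)).det = ((M.det : ℝ) : ℂ) :=
    (Complex.ofRealHom.map_det M).symm
  rw [det_mul, det_mul, det_conjTranspose, det_map, det_map, mul_right_comm, Complex.star_def,
    Complex.conj_mul', mul_comm] at hdet
  exact_mod_cast hdet

theorem isSymm_mul_inv_of_transpose_mul_eq {K : Type*} [CommRing K]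
    {Y Z : Matrix n n K} (hY : IsUnit Y.det) (h : Yᵀ * Z = Zᵀ * Y) : (Z * Y⁻¹).IsSymm := by
  have hYt : IsUnit Yᵀ.det := by rwa [det_transpose]
  rw [IsSymm, transpose_mul, transpose_nonsing_inv, ← mul_nonsing_inv_cancel_right _ Zᵀ hY,
    ← h, Matrix.mul_assoc, nonsing_inv_mul_cancel_left _ _ hYt]

end Algebra

theorem det_im_riccati_identity_general
    (n : ℕ) (a b : ℝ)
    (C : Matrix (Fin n) (Fin n) ℝ) (hC : Cᵀ = C)
    (D : ℝ → Matrix (Fin n) (Fin n) ℝ)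
    (hDsymm : ∀ s ∈ Set.Icc a b, (D s)ᵀ = D s)
    (H₀ : Matrix (Fin n) (Fin n) ℂ) (hH₀ : H₀ᵀ = H₀)
    (Y Z : ℝ → Matrix (Fin n) (Fin n) ℂ)
    (hYa : Y a = 1) (hZa : Z a = H₀)
    (hY : ∀ s ∈ Set.Icc a b, HasDerivAt Y (C.map ((↑) : ℝ → ℂ) * Z s) s)
    (hZ : ∀ s ∈ Set.Icc a b, HasDerivAt Z (-((D s).map ((↑) : ℝ → ℂ) * Y s)) s)
    (hdet : ∀ s ∈ Set.Icc a b, (Y s).det ≠ 0) :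
    ∀ s ∈ Set.Icc a b,
      (Matrix.of fun i j => ((Z s * (Y s)⁻¹) i j).im).det
          * ‖(Y s).det‖ ^ 2
        = (Matrix.of fun i j => (H₀ i j).im).det := by
  intro s hs
  have hunit : IsUnit (Y s).det := (hdet s hs).isUnit
  have hconj := wronskian_eq_of_hasDerivAt (φ := conjTranspose) (fun hf => hf.star)
    conjTranspose_neg conjTranspose_mul (by rw [conjTranspose_map_ofReal, hC])
    (fun t ht => by rw [conjTranspose_map_ofReal, hDsymm t ht]) hY hZ s hs
  have htr := wronskian_eq_of_hasDerivAt (φ := transpose) HasDerivAt.matrix_transpose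
    transpose_neg transpose_mul (by rw [← transpose_map, hC])
    (fun t ht => by rw [← transpose_map, hDsymm t ht]) hY hZ s hs
  rw [hYa, hZa, conjTranspose_one, Matrix.one_mul, Matrix.mul_one] at hconj
  rw [hYa, hZa, transpose_one, Matrix.one_mul, Matrix.mul_one] at htr
  set H := Z s * (Y s)⁻¹
  have hHY : Z s = H * Y s := (nonsing_inv_mul_cancel_right _ _ hunit).symm
  have hH : H.IsSymm :=
    isSymm_mul_inv_of_transpose_mul_eq hunit (sub_eq_zero.mp (by rw [htr, hH₀, sub_self]))
  clear_value H
  have key : (Y s)ᴴ * (H - Hᴴ) * Y s = H₀ - H₀ᴴ := by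
    rw [← hconj, hHY, conjTranspose_mul, Matrix.mul_sub, Matrix.sub_mul, Matrix.mul_assoc,
      Matrix.mul_assoc]
  rw [sub_conjTranspose_of_isSymm hH, sub_conjTranspose_of_isSymm hH₀, Matrix.mul_smul,
    Matrix.smul_mul] at key
  exact det_mul_norm_sq_of_conjTranspose_mul_mul
    (smul_right_injective _ (by simp [Complex.I_ne_zero]) key)

/-- Lemma 3.3: the determinant identity
`det(Im H(s)) ⋅ |det Y(s)|² = det(Im H₀)` for `H = Z Y⁻¹`, where `Y, Z` solve
the linear system `Y' = C Z`, `Z' = -D Y` with `Y(a) = I`, `Z(a) = H₀`. -/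
theorem det_im_riccati_identity
    (n : ℕ) (hn : 1 ≤ n) (a b : ℝ) (hab : a < b)
    (C : Matrix (Fin n) (Fin n) ℝ) (hC : Cᵀ = C)
    (D : ℝ → Matrix (Fin n) (Fin n) ℝ)
    (hD : ContinuousOn D (Set.Icc a b))
    (hDsymm : ∀ s ∈ Set.Icc a b, (D s)ᵀ = D s)
    (H₀ : Matrix (Fin n) (Fin n) ℂ) (hH₀ : H₀ᵀ = H₀)
    (Y Z : ℝ → Matrix (Fin n) (Fin n) ℂ)
    (hYa : Y a = 1) (hZa : Z a = H₀)
    (hY : ∀ s ∈ Set.Icc a b, HasDerivAt Y (C.map ((↑) : ℝ → ℂ) * Z s) s)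
    (hZ : ∀ s ∈ Set.Icc a b, HasDerivAt Z (-((D s).map ((↑) : ℝ → ℂ) * Y s)) s)
    (hdet : ∀ s ∈ Set.Icc a b, (Y s).det ≠ 0) :
    ∀ s ∈ Set.Icc a b,
      (Matrix.of fun i j => ((Z s * (Y s)⁻¹) i j).im).det
          * ‖(Y s).det‖ ^ 2
        = (Matrix.of fun i j => (H₀ i j).im).det :=
  det_im_riccati_identity_general n a b C hC D hDsymm H₀ hH₀ Y Z hYa hZa hY hZ hdet
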